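/- arXiv:2004.12774 — 4 statements merged into one kernel-verified Lean document; each statement's English description precedes it below -/
import Mathlib

section
/- Let L be a finite-dimensional real Lie algebra, let n be a Lie ideal of L and let t be an abelian Lie subalgebra of L such that L is the direct sum of n and t as vector spaces, and let p : L → n denote the linear projection onto n with kernel t. Let g be a Lie subalgebra of L such that [g,g] = [L,L] and n = p(g) + [g,g]. If moreover dim g = dim n, then t ∩ g = 0, and the linear map g → n/[g,g] sending X to the class of p(X) is surjective with kernel exactly [g,g]; in particular it induces a linear isomorphism g/[g,g] ≅ n/[g,g]. -/
/-- The span of all brackets of elements of a Lie subalgebra `g`, i.e. the derived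
subalgebra `[g, g]`, viewed as a submodule of the ambient Lie algebra. -/
def LieSubalgebra.commutatorSpan (R L : Type*) [CommRing R] [LieRing L] [LieAlgebra R L]
    (g : LieSubalgebra R L) : Submodule R L :=
  Submodule.span R {z : L | ∃ x ∈ g, ∃ y ∈ g, z = ⁅x, y⁆}

/-- The linear map `g → n / [g,g]` sending `X` to the class of `p X`, where `p` is a linear
map of the ambient Lie algebra with values in the Lie ideal `n`. -/
noncomputable def projToQuot {L : Type*} [LieRing L] [LieAlgebra ℝ L]
    (n : LieIdeal ℝ L) (g : LieSubalgebra ℝ L) (p : L →ₗ[ℝ] L) (hp_mem : ∀ x : L, p x ∈ n)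
    (X : g.toSubmodule) :
    (n : Submodule ℝ L) ⧸ (g.commutatorSpan ℝ L).comap (n : Submodule ℝ L).subtype :=
  Submodule.Quotient.mk ⟨p X, hp_mem X⟩

/-- Let `L` be a finite-dimensional real Lie algebra, `n` a Lie ideal of `L` and `t` an
abelian Lie subalgebra such that `L = n ⊕ t` as vector spaces, with `p` the linear projection
onto `n` with kernel `t`. Let `g` be a Lie subalgebra with `[g,g] = [L,L]` and
`n = p(g) + [g,g]`. If `dim g = dim n` then `t ∩ g = 0`, and the map `g → n/[g,g]`,
`X ↦ p X mod [g,g]`, is surjective with kernel exactly `[g,g]`; in particular it induces a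
linear isomorphism `g/[g,g] ≅ n/[g,g]`. -/
theorem inf_eq_bot_and_surjective_of_finrank_eq
    (L : Type*) [LieRing L] [LieAlgebra ℝ L] [FiniteDimensional ℝ L]
    (n : LieIdeal ℝ L) (t : LieSubalgebra ℝ L)
    (ht_ab : ∀ x ∈ t, ∀ y ∈ t, ⁅x, y⁆ = 0)
    (hcompl : IsCompl (n : Submodule ℝ L) t.toSubmodule)
    (p : L →ₗ[ℝ] L)
    (hp_mem : ∀ x : L, p x ∈ n)
    (hp_fix : ∀ x ∈ n, p x = x)
    (hp_ker : ∀ x ∈ t, p x = 0)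
    (g : LieSubalgebra ℝ L)
    (hcomm : g.commutatorSpan ℝ L = Submodule.span ℝ {z : L | ∃ x y : L, z = ⁅x, y⁆})
    (hgen : (n : Submodule ℝ L) = Submodule.map p g.toSubmodule ⊔ g.commutatorSpan ℝ L)
    (hdim : Module.finrank ℝ g = Module.finrank ℝ n) :
    t.toSubmodule ⊓ g.toSubmodule = ⊥ ∧
    Function.Surjective (projToQuot n g p hp_mem) ∧
    (∀ X : g.toSubmodule, projToQuot n g p hp_mem X = 0 ↔ (X : L) ∈ g.commutatorSpan ℝ L) ∧
    Nonempty
      ((g.toSubmodule ⧸ (g.commutatorSpan ℝ L).comap g.toSubmodule.subtype) ≃ₗ[ℝ]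
        ((n : Submodule ℝ L) ⧸ (g.commutatorSpan ℝ L).comap (n : Submodule ℝ L).subtype)) := by
  classical
  set C := g.commutatorSpan ℝ L with hCdef
  -- C ≤ n
  have hCn : C ≤ (n : Submodule ℝ L) := by
    rw [hCdef]
    apply Submodule.span_le.mpr
    rintro z ⟨x, hx, y, hy, rfl⟩
    -- decompose x, y
    have hxmem : x ∈ (n : Submodule ℝ L) ⊔ t.toSubmodule := by
      rw [hcompl.sup_eq_top]; trivial
    have hymem : y ∈ (n : Submodule ℝ L) ⊔ t.toSubmodule := by
      rw [hcompl.sup_eq_top]; trivial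
    obtain ⟨a, ha, b, hb, rfl⟩ := Submodule.mem_sup.mp hxmem
    obtain ⟨c, hc, d, hd, rfl⟩ := Submodule.mem_sup.mp hymem
    have h1 : ⁅a + b, c + d⁆ = ⁅a, c⁆ + ⁅a, d⁆ + ⁅b, c⁆ + ⁅b, d⁆ := by
      simp [lie_add, add_lie]; abel
    have hbd : ⁅b, d⁆ = 0 := ht_ab b hb d hd
    have hac : ⁅a, c⁆ ∈ n := lie_mem_left ℝ L n a c ha
    have had : ⁅a, d⁆ ∈ n := lie_mem_left ℝ L n a d ha
    have hbc : ⁅b, c⁆ ∈ n := lie_mem_right ℝ L n b c hc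
    rw [h1, hbd, add_zero]
    exact n.add_mem' (n.add_mem' hac had) hbc
  -- C ≤ g
  have hCg : C ≤ g.toSubmodule := by
    rw [hCdef]
    apply Submodule.span_le.mpr
    rintro z ⟨x, hx, y, hy, rfl⟩
    exact g.lie_mem hx hy
  set C' : Submodule ℝ (n : Submodule ℝ L) := C.comap (n : Submodule ℝ L).subtype with hC'def
  -- the linear map q
  set pg : g.toSubmodule →ₗ[ℝ] (n : Submodule ℝ L) :=
    LinearMap.codRestrict (n : Submodule ℝ L) (p ∘ₗ g.toSubmodule.subtype)
      (fun x => hp_mem x) with hpgdef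
  set q : g.toSubmodule →ₗ[ℝ] ((n : Submodule ℝ L) ⧸ C') := C'.mkQ ∘ₗ pg with hqdef
  have hq_eq : ∀ X : g.toSubmodule, projToQuot n g p hp_mem X = q X := fun X => rfl
  -- surjectivity
  have hsurj : Function.Surjective q := by
    intro y
    obtain ⟨⟨v, hv⟩, rfl⟩ := Submodule.Quotient.mk_surjective C' y
    have hv' : v ∈ Submodule.map p g.toSubmodule ⊔ C := by rw [← hgen]; exact hv
    obtain ⟨u, hu, c, hc, rfl⟩ := Submodule.mem_sup.mp hv'
    obtain ⟨x, hx, rfl⟩ := hu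
    refine ⟨⟨x, hx⟩, ?_⟩
    rw [hqdef]
    simp only [LinearMap.comp_apply, Submodule.mkQ_apply]
    rw [Submodule.Quotient.eq]
    have : (pg ⟨x, hx⟩ : L) = p x := rfl
    refine (Submodule.mem_comap.mpr ?_ : _ ∈ C')
    show ((pg ⟨x, hx⟩ : L) - (p x + c)) ∈ C
    rw [this]
    simpa using C.neg_mem hc
  -- kernel
  have hker_ge : C.comap g.toSubmodule.subtype ≤ LinearMap.ker q := by
    intro X hX
    have hXC : (X : L) ∈ C := hX
    have hXn : (X : L) ∈ n := hCn hXC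
    have : p (X : L) = (X : L) := hp_fix _ hXn
    rw [LinearMap.mem_ker, hqdef]
    simp only [LinearMap.comp_apply, Submodule.mkQ_apply, Submodule.Quotient.mk_eq_zero]
    show (pg X : L) ∈ C
    show p (X : L) ∈ C
    rw [this]; exact hXC
  have hfinC' : Module.finrank ℝ C' = Module.finrank ℝ C :=
    (Submodule.comapSubtypeEquivOfLe hCn).finrank_eq
  have hfinCg : Module.finrank ℝ (C.comap g.toSubmodule.subtype) = Module.finrank ℝ C :=
    (Submodule.comapSubtypeEquivOfLe hCg).finrank_eq
  have hrank : Module.finrank ℝ (LinearMap.range q) + Module.finrank ℝ (LinearMap.ker q)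
      = Module.finrank ℝ g.toSubmodule := LinearMap.finrank_range_add_finrank_ker q
  have hrange : LinearMap.range q = ⊤ := LinearMap.range_eq_top.mpr hsurj
  have hquot : Module.finrank ℝ ((n : Submodule ℝ L) ⧸ C') + Module.finrank ℝ C'
      = Module.finrank ℝ (n : Submodule ℝ L) := Submodule.finrank_quotient_add_finrank C'
  have hrange' : Module.finrank ℝ (LinearMap.range q)
      = Module.finrank ℝ ((n : Submodule ℝ L) ⧸ C') := by
    rw [hrange]; exact finrank_top _ _
  have hdim' : Module.finrank ℝ g.toSubmodule = Module.finrank ℝ (n : Submodule ℝ L) := hdim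
  have hkerrank : Module.finrank ℝ (LinearMap.ker q) = Module.finrank ℝ C := by omega
  have hker : LinearMap.ker q = C.comap g.toSubmodule.subtype := by
    refine (Submodule.eq_of_le_of_finrank_le hker_ge ?_).symm
    rw [hkerrank, hfinCg]
  -- iff statement
  have hiff : ∀ X : g.toSubmodule, projToQuot n g p hp_mem X = 0 ↔ (X : L) ∈ C := by
    intro X
    rw [hq_eq, ← LinearMap.mem_ker, hker]
    exact Iff.rfl
  refine ⟨?_, ?_, hiff, ?_⟩
  · apply le_antisymm _ bot_le
    rintro x ⟨hxt, hxg⟩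
    have hpx : p x = 0 := hp_ker x hxt
    have h0 : projToQuot n g p hp_mem ⟨x, hxg⟩ = 0 := by
      unfold projToQuot
      rw [Submodule.Quotient.mk_eq_zero]
      show p x ∈ C
      rw [hpx]; exact C.zero_mem
    have hxC : x ∈ C := (hiff ⟨x, hxg⟩).mp h0
    have hxn : x ∈ (n : Submodule ℝ L) := hCn hxC
    have : x ∈ (n : Submodule ℝ L) ⊓ t.toSubmodule := ⟨hxn, hxt⟩
    rw [hcompl.inf_eq_bot] at this
    exact this
  · intro y
    obtain ⟨X, hX⟩ := hsurj y
    exact ⟨X, by rw [hq_eq]; exact hX⟩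
  · exact ⟨Submodule.quotEquivOfEq _ _ hker.symm ≪≫ₗ q.quotKerEquivOfSurjective hsurj⟩
end

section
/- Let L be a finite-dimensional complex Lie algebra, let h be a Lie ideal of L and let d be a Lie subalgebra of L such that L is the direct sum of h and d as vector spaces, and let τ : L → h denote the linear projection onto h with kernel d. Let n be a Lie subalgebra of L such that the restriction of τ to n is a linear bijection n → h. Let S ∈ d be an element with [S, n] ⊆ n, and suppose that the endomorphism ad_S restricted to n (i.e. X ↦ [S,X] on n) is diagonalizable. Then the endomorphism ad_S restricted to h (i.e. v ↦ [S,v] on h) is also diagonalizable and has the same characteristic polynomial as ad_S restricted to n; in particular the two restrictions have the same eigenvalues with the same multiplicities. -/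
theorem eigenspace_conj' {K M N : Type*} [Field K] [AddCommGroup M] [Module K M]
    [AddCommGroup N] [Module K N]
    (e : M ≃ₗ[K] N) (f : Module.End K M) (μ : K) :
    Module.End.eigenspace (e.conj f) μ = (Module.End.eigenspace f μ).map (e : M →ₗ[K] N) := by
  ext y
  simp only [Module.End.mem_eigenspace_iff, Submodule.mem_map]
  constructor
  · intro hy
    refine ⟨e.symm y, ?_, e.apply_symm_apply y⟩
    apply e.injective
    simpa [LinearEquiv.conj_apply] using hy
  · rintro ⟨x, hx, rfl⟩
    simp [LinearEquiv.conj_apply, hx]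

/-- Since `h` is a Lie ideal, the adjoint map `ad S` preserves `h`. -/
theorem LieIdeal.ad_mem {L : Type*} [LieRing L] [LieAlgebra ℂ L]
    (h : LieIdeal ℂ L) (S : L) :
    ∀ x ∈ (h : Submodule ℂ L), LieAlgebra.ad ℂ L S x ∈ (h : Submodule ℂ L) :=
  fun _ hx => h.lie_mem hx

/-- Let `L` be a finite-dimensional complex Lie algebra, `h` a Lie ideal and `d` a Lie
subalgebra with `L = h ⊕ d` as vector spaces, and let `τ` be the linear projection onto `h`
with kernel `d`. Let `n` be a Lie subalgebra such that `τ` restricts to a linear bijection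
`n → h`. If `S ∈ d` satisfies `⁅S, n⁆ ⊆ n` and `ad S` restricted to `n` is diagonalizable,
then `ad S` restricted to `h` is diagonalizable with the same characteristic polynomial as
`ad S` restricted to `n`; in particular both restrictions have the same eigenvalues with
the same multiplicities. -/
theorem adjoint_restrictions_same_charpoly
    (L : Type*) [LieRing L] [LieAlgebra ℂ L] [FiniteDimensional ℂ L]
    (h : LieIdeal ℂ L) (d : LieSubalgebra ℂ L)
    (hcompl : IsCompl (h : Submodule ℂ L) d.toSubmodule)
    (τ : L →ₗ[ℂ] L)
    (hτ_mem : ∀ x : L, τ x ∈ h)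
    (hτ_fix : ∀ x ∈ h, τ x = x)
    (hτ_ker : ∀ x ∈ d, τ x = 0)
    (n : LieSubalgebra ℂ L)
    (hbij : Function.Bijective
      (fun x : n.toSubmodule => (⟨τ x, hτ_mem x⟩ : (h : Submodule ℂ L))))
    (S : L) (hS : S ∈ d)
    (hSn : ∀ x ∈ n.toSubmodule, LieAlgebra.ad ℂ L S x ∈ n.toSubmodule)
    (hdiag : ⨆ μ : ℂ,
        Module.End.eigenspace ((LieAlgebra.ad ℂ L S).restrict hSn) μ = ⊤) :
    (⨆ μ : ℂ,
        Module.End.eigenspace ((LieAlgebra.ad ℂ L S).restrict (h.ad_mem S)) μ = ⊤) ∧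
    LinearMap.charpoly ((LieAlgebra.ad ℂ L S).restrict (h.ad_mem S))
      = LinearMap.charpoly ((LieAlgebra.ad ℂ L S).restrict hSn) := by
  classical
  set An := (LieAlgebra.ad ℂ L S).restrict hSn with hAn
  set Ah := (LieAlgebra.ad ℂ L S).restrict (h.ad_mem S) with hAh
  have key : ∀ y : L, τ ⁅S, y⁆ = ⁅S, τ y⁆ := by
    intro y
    have hy : y ∈ (h : Submodule ℂ L) ⊔ d.toSubmodule := by
      rw [hcompl.sup_eq_top]; trivial
    obtain ⟨a, ha, b, hb, rfl⟩ := Submodule.mem_sup.1 hy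
    have hτab : τ (a + b) = a := by
      rw [map_add, hτ_fix a ha, hτ_ker b hb, add_zero]
    rw [hτab, lie_add, map_add, hτ_fix _ (h.lie_mem ha),
      hτ_ker _ (d.lie_mem hS hb), add_zero]
  let f : n.toSubmodule →ₗ[ℂ] (h : Submodule ℂ L) :=
    LinearMap.codRestrict (h : Submodule ℂ L) (τ ∘ₗ n.toSubmodule.subtype)
      (fun x => hτ_mem x)
  let e : n.toSubmodule ≃ₗ[ℂ] (h : Submodule ℂ L) := LinearEquiv.ofBijective f hbij
  have hconj : e.conj An = Ah := by
    have hcomm : ∀ x : n.toSubmodule, e (An x) = Ah (e x) := by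
      intro x
      ext
      exact key x
    ext y
    obtain ⟨x, rfl⟩ := e.surjective y
    rw [LinearEquiv.conj_apply]
    simp only [LinearMap.comp_apply, LinearEquiv.coe_coe, LinearEquiv.symm_apply_apply]
    exact Subtype.ext_iff.1 (hcomm x)
  constructor
  · rw [← hconj]
    calc ⨆ μ : ℂ, Module.End.eigenspace (e.conj An) μ
        = ⨆ μ : ℂ, (Module.End.eigenspace An μ).map
            (e : n.toSubmodule →ₗ[ℂ] (h : Submodule ℂ L)) := by
          simp_rw [eigenspace_conj']
      _ = (⨆ μ : ℂ, Module.End.eigenspace An μ).map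
            (e : n.toSubmodule →ₗ[ℂ] (h : Submodule ℂ L)) := by
          rw [Submodule.map_iSup]
      _ = ⊤ := by rw [hdiag, Submodule.map_top, LinearEquiv.range]
  · rw [← hconj, LinearEquiv.charpoly_conj]
end

section
/- A monic real polynomial f of degree 3 is the characteristic polynomial of some derivation of the 3-dimensional Heisenberg Lie algebra h₃ if and only if there exist real numbers s and p such that f = (X − s)(X² − sX + p). -/
set_option linter.unusedTactic false
set_option linter.unnecessarySeqFocus false
set_option linter.unreachableTactic false

open Polynomial

/-- The 3-dimensional Heisenberg Lie algebra `h₃`: the real vector space `Fin 3 → ℝ`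
with basis `e₁, e₂, e₃` and only nonzero bracket `⁅e₁, e₂⁆ = e₃`. -/
def H3 : Type := Fin 3 → ℝ

noncomputable instance : AddCommGroup H3 := Pi.addCommGroup
noncomputable instance : Module ℝ H3 := Pi.module _ _ _
instance : FiniteDimensional ℝ H3 := inferInstanceAs (FiniteDimensional ℝ (Fin 3 → ℝ))

lemma H3.add_apply (x y : H3) (i : Fin 3) : (x + y) i = x i + y i := rfl
lemma H3.smul_apply (r : ℝ) (x : H3) (i : Fin 3) : (r • x) i = r * x i := rfl

noncomputable instance : LieRing H3 :=
  { (inferInstance : AddCommGroup H3) with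
    bracket := fun x y => ![0, 0, x 0 * y 1 - x 1 * y 0]
    add_lie := by
      intro x y z
      show (![_,_,_] : Fin 3 → ℝ) = ![_,_,_] + ![_,_,_]
      funext i
      fin_cases i <;> simp [H3.add_apply] <;> erw [Pi.add_apply] <;> simp <;> ring
    lie_add := by
      intro x y z
      show (![_,_,_] : Fin 3 → ℝ) = ![_,_,_] + ![_,_,_]
      funext i
      fin_cases i <;> simp [H3.add_apply] <;> erw [Pi.add_apply] <;> simp <;> ring
    lie_self := by
      intro x
      show (![_,_,_] : Fin 3 → ℝ) = 0
      funext i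
      fin_cases i <;> simp <;> ring
    leibniz_lie := by
      intro x y z
      show (![_,_,_] : Fin 3 → ℝ) = ![_,_,_] + ![_,_,_]
      funext i
      fin_cases i <;> simp [H3.add_apply] <;> erw [Pi.add_apply] <;> simp <;> ring }

noncomputable instance : LieAlgebra ℝ H3 :=
  { lie_smul := by
      intro r x y
      show (![_,_,_] : Fin 3 → ℝ) = r • ![_,_,_]
      funext i
      fin_cases i <;> simp [H3.smul_apply] <;> erw [Pi.smul_apply] <;> simp <;> ring }

/-!
A derivation `D` of `h₃` preserves the centre `ℝ e₃`: since `e₃ = ⁅e₁, e₂⁆`, the Leibniz rule gives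
`D e₃ = ⁅D e₁, e₂⁆ + ⁅e₁, D e₂⁆ = (tr A) e₃`, where `A` is the matrix of the map induced by `D` on
`h₃ ⧸ ℝ e₃`. The matrix of `D` is therefore block triangular, and
`charpoly D = charpoly A * (X - tr A) = (X - s) (X² - s X + p)` with `s = tr A`, `p = det A`.
Conversely, for every `A` the map acting by `A` on `ℝ e₁ ⊕ ℝ e₂` and by `tr A` on `e₃` is a
derivation; the companion matrix of `X² - s X + p` realises `(X - s) (X² - s X + p)`.
-/

namespace Matrix

variable {R : Type*} [CommRing R] [Nontrivial R]

theorem charpoly_fin_three_of_col_two_eq_zero (M : Matrix (Fin 3) (Fin 3) R) (h₀ : M 0 2 = 0)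
    (h₁ : M 1 2 = 0) :
    M.charpoly = (M.submatrix Fin.castSucc Fin.castSucc).charpoly * (X - C (M 2 2)) := by
  rw [charpoly_fin_two, charpoly, det_fin_three]
  simp [trace_fin_two, det_fin_two, h₀, h₁]
  ring

end Matrix

namespace H3

@[ext]
lemma ext {x y : H3} (h : ∀ i, x i = y i) : x = y := funext h

lemma sub_apply (x y : H3) (i : Fin 3) : (x - y) i = x i - y i := rfl

lemma lie_def (x y : H3) : ⁅x, y⁆ = ![0, 0, x 0 * y 1 - x 1 * y 0] := rfl

noncomputable def stdBasis : Module.Basis (Fin 3) ℝ H3 := Pi.basisFun ℝ (Fin 3)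

lemma stdBasis_apply (i j : Fin 3) : stdBasis i j = if j = i then 1 else 0 :=
  (congrFun (Pi.basisFun_apply ℝ (Fin 3) i) j).trans (Pi.single_apply i 1 j)

lemma lie_stdBasis_zero_one : ⁅stdBasis 0, stdBasis 1⁆ = stdBasis 2 := by
  ext i
  fin_cases i <;> simp [lie_def, stdBasis_apply]

lemma toMatrix_stdBasis_apply (f : Module.End ℝ H3) (i j : Fin 3) :
    LinearMap.toMatrix stdBasis stdBasis f i j = f (stdBasis j) i :=
  LinearMap.toMatrix_apply _ _ _ _ _

lemma toLin_stdBasis_apply (B : Matrix (Fin 3) (Fin 3) ℝ) (x : H3) :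
    Matrix.toLin stdBasis stdBasis B x = B.mulVec x :=
  rfl

/-- The matrix of the map induced by `D` on `h₃ ⧸ span {e₃}`, in the basis `e₁, e₂`. -/
noncomputable def quotMatrix (D : LieDerivation ℝ H3 H3) : Matrix (Fin 2) (Fin 2) ℝ :=
  (LinearMap.toMatrix stdBasis stdBasis D.toLinearMap).submatrix Fin.castSucc Fin.castSucc

lemma derivation_apply_stdBasis_two (D : LieDerivation ℝ H3 H3) :
    D (stdBasis 2) = (quotMatrix D).trace • stdBasis 2 := by
  rw [← lie_stdBasis_zero_one, LieDerivation.apply_lie_eq_sub]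
  ext i
  rw [sub_apply, smul_apply]
  fin_cases i <;>
    simp [lie_def, stdBasis_apply, quotMatrix, Matrix.trace_fin_two, toMatrix_stdBasis_apply,
      add_comm]

theorem charpoly_derivation (D : LieDerivation ℝ H3 H3) :
    LinearMap.charpoly D.toLinearMap = (quotMatrix D).charpoly * (X - C (quotMatrix D).trace) := by
  set M := LinearMap.toMatrix stdBasis stdBasis D.toLinearMap
  have hM (i : Fin 3) : M i 2 = ((quotMatrix D).trace • stdBasis 2 : H3) i :=
    (toMatrix_stdBasis_apply _ i 2).trans (congrFun (derivation_apply_stdBasis_two D) i)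
  simp only [smul_apply, stdBasis_apply] at hM
  rw [← LinearMap.charpoly_toMatrix D.toLinearMap stdBasis,
    Matrix.charpoly_fin_three_of_col_two_eq_zero M (by simpa using hM 0) (by simpa using hM 1),
    hM 2]
  simp [quotMatrix, M]

noncomputable def derivationOfMatrix (A : Matrix (Fin 2) (Fin 2) ℝ) : LieDerivation ℝ H3 H3 where
  toLinearMap := Matrix.toLin stdBasis stdBasis !![A 0 0, A 0 1, 0; A 1 0, A 1 1, 0; 0, 0, A.trace]
  leibniz' x y := by
    rw [toLin_stdBasis_apply, toLin_stdBasis_apply, toLin_stdBasis_apply, lie_def]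
    -- the brackets on the right come from `lieRingSelfModule`: `lie_def` holds only up to unfolding
    erw [lie_def, lie_def]
    ext i
    erw [Pi.sub_apply]
    fin_cases i <;>
      simp [Matrix.mulVec, dotProduct, Fin.sum_univ_three, Matrix.trace_fin_two] <;> ring

lemma quotMatrix_derivationOfMatrix (A : Matrix (Fin 2) (Fin 2) ℝ) :
    quotMatrix (derivationOfMatrix A) = A := by
  ext i j
  rw [quotMatrix, Matrix.submatrix_apply]
  erw [LinearMap.toMatrix_toLin]
  fin_cases i <;> fin_cases j <;> simp

end H3

theorem charpoly_derivation_heisenberg_iff_general (f : Polynomial ℝ) :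
    (∃ D : LieDerivation ℝ H3 H3, LinearMap.charpoly D.toLinearMap = f) ↔
      ∃ s p : ℝ, f = (X - C s) * (X ^ 2 - C s * X + C p) := by
  constructor
  · rintro ⟨D, rfl⟩
    refine ⟨(H3.quotMatrix D).trace, (H3.quotMatrix D).det, ?_⟩
    rw [H3.charpoly_derivation, Matrix.charpoly_fin_two, mul_comm]
  · rintro ⟨s, p, rfl⟩
    refine ⟨H3.derivationOfMatrix !![0, -p; 1, s], ?_⟩
    rw [H3.charpoly_derivation, H3.quotMatrix_derivationOfMatrix, Matrix.charpoly_fin_two, mul_comm]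
    simp [Matrix.trace_fin_two, Matrix.det_fin_two]

/-- A monic real polynomial `f` of degree 3 is the characteristic polynomial of some
derivation of the 3-dimensional Heisenberg Lie algebra `h₃` if and only if
`f = (X - s) * (X² - s*X + p)` for some real numbers `s` and `p`. -/
theorem charpoly_derivation_heisenberg_iff (f : Polynomial ℝ) (hf : f.Monic)
    (hdeg : f.natDegree = 3) :
    (∃ D : LieDerivation ℝ H3 H3, LinearMap.charpoly D.toLinearMap = f) ↔
      ∃ s p : ℝ, f = (X - C s) * (X ^ 2 - C s * X + C p) :=
  charpoly_derivation_heisenberg_iff_general f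
end

section
/- A monic real polynomial f of degree 4 is the characteristic polynomial of some derivation of the filiform Lie algebra n₄ if and only if there exist real numbers a and e such that f = (X − a)(X − e)(X − (a + e))(X − (2a + e)). -/
set_option linter.unusedTactic false
set_option linter.unnecessarySeqFocus false
set_option linter.unreachableTactic false

open Polynomial

/-- The 4-dimensional filiform Lie algebra `n₄`: the real vector space `Fin 4 → ℝ` with
basis `e₁, e₂, e₃, e₄` and only nonzero brackets `⁅e₁, e₂⁆ = e₃` and `⁅e₁, e₃⁆ = e₄`. -/
def N4 : Type := Fin 4 → ℝ

noncomputable instance : AddCommGroup N4 := Pi.addCommGroup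
noncomputable instance : Module ℝ N4 := Pi.module _ _ _
instance : FiniteDimensional ℝ N4 := inferInstanceAs (FiniteDimensional ℝ (Fin 4 → ℝ))

lemma N4.add_apply (x y : N4) (i : Fin 4) : (x + y) i = x i + y i := rfl
lemma N4.smul_apply (r : ℝ) (x : N4) (i : Fin 4) : (r • x) i = r * x i := rfl

noncomputable instance : LieRing N4 :=
  { (inferInstance : AddCommGroup N4) with
    bracket := fun x y => ![0, 0, x 0 * y 1 - x 1 * y 0, x 0 * y 2 - x 2 * y 0]
    add_lie := by
      intro x y z
      show (![_,_,_,_] : Fin 4 → ℝ) = ![_,_,_,_] + ![_,_,_,_]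
      funext i
      change _ = (_ : Fin 4 → ℝ) i + (_ : Fin 4 → ℝ) i
      fin_cases i <;> simp [N4.add_apply] <;> ring
    lie_add := by
      intro x y z
      show (![_,_,_,_] : Fin 4 → ℝ) = ![_,_,_,_] + ![_,_,_,_]
      funext i
      change _ = (_ : Fin 4 → ℝ) i + (_ : Fin 4 → ℝ) i
      fin_cases i <;> simp [N4.add_apply] <;> ring
    lie_self := by
      intro x
      show (![_,_,_,_] : Fin 4 → ℝ) = 0
      funext i
      fin_cases i <;> simp <;> ring
    leibniz_lie := by
      intro x y z
      show (![_,_,_,_] : Fin 4 → ℝ) = ![_,_,_,_] + ![_,_,_,_]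
      funext i
      change _ = (_ : Fin 4 → ℝ) i + (_ : Fin 4 → ℝ) i
      fin_cases i <;> simp [N4.add_apply] <;> ring }

noncomputable instance : LieAlgebra ℝ N4 :=
  { lie_smul := by
      intro r x y
      show (![_,_,_,_] : Fin 4 → ℝ) = r • ![_,_,_,_]
      funext i
      change _ = r * (_ : Fin 4 → ℝ) i
      fin_cases i <;> simp [N4.smul_apply] <;> ring }


/-!
Leibniz's rule applied to `e₃ = ⁅e₁, e₂⁆`, `e₄ = ⁅e₁, e₃⁆` and `⁅e₂, e₃⁆ = 0` shows that every
derivation `D` of `n₄` is lower triangular in the basis `e₁, …, e₄`, with diagonal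
`a, e, a + e, 2a + e` where `a` and `e` are the diagonal entries of `D` at `e₁` and `e₂`.
Conversely, the diagonal map with these weights is a derivation.
-/

theorem Matrix.charpoly_of_isLowerTriangular {R n : Type*} [CommRing R] [Fintype n] [DecidableEq n]
    [LinearOrder n] (M : Matrix n n R) (h : M.IsLowerTriangular) :
    M.charpoly = ∏ i : n, (X - C (M i i)) := by
  simp [Matrix.charpoly, Matrix.det_of_isLowerTriangular _ h.charmatrix]

namespace N4

variable (x y : N4)

@[simp] lemma zero_apply (i : Fin 4) : (0 : N4) i = 0 := rfl
@[simp] lemma sub_apply (i : Fin 4) : (x - y) i = x i - y i := rfl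

@[simp] lemma lie_apply_zero : ⁅x, y⁆ 0 = 0 := rfl
@[simp] lemma lie_apply_one : ⁅x, y⁆ 1 = 0 := rfl
@[simp] lemma lie_apply_two : ⁅x, y⁆ 2 = x 0 * y 1 - x 1 * y 0 := rfl
@[simp] lemma lie_apply_three : ⁅x, y⁆ 3 = x 0 * y 2 - x 2 * y 0 := rfl

/-- `stdBasis i` is the basis vector `e_{i+1}` of `n₄`. -/
noncomputable def stdBasis : Module.Basis (Fin 4) ℝ N4 := Pi.basisFun ℝ (Fin 4)

lemma stdBasis_apply (j i : Fin 4) : stdBasis j i = if i = j then 1 else 0 :=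
  Pi.basisFun_apply ℝ (Fin 4) j ▸ Pi.single_apply j 1 i

lemma toMatrix_stdBasis_apply (f : N4 →ₗ[ℝ] N4) (i j : Fin 4) :
    LinearMap.toMatrix stdBasis stdBasis f i j = f (stdBasis j) i := by
  rw [LinearMap.toMatrix_apply]
  exact Pi.basisFun_repr (R := ℝ) (η := Fin 4) _ i

lemma stdBasis_zero_lie_stdBasis_one : ⁅stdBasis 0, stdBasis 1⁆ = stdBasis 2 :=
  funext fun i => by fin_cases i <;> simp [stdBasis_apply]

lemma stdBasis_zero_lie_stdBasis_two : ⁅stdBasis 0, stdBasis 2⁆ = stdBasis 3 :=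
  funext fun i => by fin_cases i <;> simp [stdBasis_apply]

lemma stdBasis_one_lie_stdBasis_two : ⁅stdBasis 1, stdBasis 2⁆ = 0 :=
  funext fun i => by fin_cases i <;> simp [stdBasis_apply]

variable (D : LieDerivation ℝ N4 N4)

lemma derivation_stdBasis_apply_eq_zero_of_lt {i j : Fin 4} (hij : i < j) :
    D (stdBasis j) i = 0 := by
  have h₁₀ : D (stdBasis 1) 0 = 0 := by
    have h := D.apply_lie_eq_sub (stdBasis 1) (stdBasis 2)
    rw [stdBasis_one_lie_stdBasis_two, map_zero] at h
    simpa [stdBasis_apply] using (congrFun h 3).symm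
  have h₂ : D (stdBasis 2) = D ⁅stdBasis 0, stdBasis 1⁆ := by rw [stdBasis_zero_lie_stdBasis_one]
  have h₃ : D (stdBasis 3) = D ⁅stdBasis 0, stdBasis 2⁆ := by rw [stdBasis_zero_lie_stdBasis_two]
  revert hij
  fin_cases i <;> fin_cases j <;> simp [h₁₀, h₂, h₃, stdBasis_apply]

lemma derivation_stdBasis_two_apply_two :
    D (stdBasis 2) 2 = D (stdBasis 0) 0 + D (stdBasis 1) 1 := by
  rw [← stdBasis_zero_lie_stdBasis_one]
  simp [stdBasis_apply, add_comm]

lemma derivation_stdBasis_three_apply_three :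
    D (stdBasis 3) 3 = 2 * D (stdBasis 0) 0 + D (stdBasis 1) 1 := by
  calc D (stdBasis 3) 3 = D (stdBasis 0) 0 + D (stdBasis 2) 2 := by
        rw [← stdBasis_zero_lie_stdBasis_two]
        simp [stdBasis_apply, add_comm]
    _ = 2 * D (stdBasis 0) 0 + D (stdBasis 1) 1 := by
        rw [derivation_stdBasis_two_apply_two]
        ring

theorem charpoly_eq_prod_of_lowerTriangular (f : N4 →ₗ[ℝ] N4)
    (hf : ∀ ⦃i j : Fin 4⦄, i < j → f (stdBasis j) i = 0) :
    f.charpoly = ∏ i, (X - C (f (stdBasis i) i)) := by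
  rw [← LinearMap.charpoly_toMatrix f stdBasis, Matrix.charpoly_of_isLowerTriangular]
  · simp only [toMatrix_stdBasis_apply]
  · intro i j hij
    rw [toMatrix_stdBasis_apply]
    exact hf hij

theorem charpoly_derivation :
    D.toLinearMap.charpoly = ∏ i, (X - C (D (stdBasis i) i)) :=
  charpoly_eq_prod_of_lowerTriangular _ fun _ _ => derivation_stdBasis_apply_eq_zero_of_lt D

noncomputable def diagonalMap (w : Fin 4 → ℝ) : N4 →ₗ[ℝ] N4 where
  toFun x i := w i * x i
  map_add' x y := funext fun i => mul_add (w i) (x i) (y i)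
  map_smul' r x := funext fun i => mul_left_comm (w i) r (x i)

lemma diagonalMap_apply (w : Fin 4 → ℝ) (x : N4) (i : Fin 4) : diagonalMap w x i = w i * x i :=
  rfl

noncomputable def diagonalDerivation (a e : ℝ) : LieDerivation ℝ N4 N4 where
  toLinearMap := diagonalMap ![a, e, a + e, 2 * a + e]
  leibniz' x y := funext fun i => by
    fin_cases i <;>
      simp only [Fin.reduceFinMk, Fin.isValue, diagonalMap_apply, sub_apply, lie_apply_zero,
        lie_apply_one, lie_apply_two, lie_apply_three, Matrix.cons_val] <;> ring

theorem charpoly_diagonalDerivation (a e : ℝ) :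
    (diagonalDerivation a e).toLinearMap.charpoly =
      (X - C a) * (X - C e) * (X - C (a + e)) * (X - C (2 * a + e)) := by
  rw [charpoly_eq_prod_of_lowerTriangular, Fin.prod_univ_four]
  · simp [diagonalDerivation, diagonalMap_apply, stdBasis_apply]
  · intro i j hij
    simp [diagonalDerivation, diagonalMap_apply, stdBasis_apply, hij.ne]

end N4

theorem charpoly_derivation_n4_iff_general (f : Polynomial ℝ) :
    (∃ D : LieDerivation ℝ N4 N4, LinearMap.charpoly D.toLinearMap = f) ↔
      ∃ a e : ℝ,
        f = (X - C a) * (X - C e) * (X - C (a + e)) * (X - C (2 * a + e)) := by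
  constructor
  · rintro ⟨D, rfl⟩
    refine ⟨D (N4.stdBasis 0) 0, D (N4.stdBasis 1) 1, ?_⟩
    rw [N4.charpoly_derivation, Fin.prod_univ_four, N4.derivation_stdBasis_three_apply_three,
      N4.derivation_stdBasis_two_apply_two]
  · rintro ⟨a, e, rfl⟩
    exact ⟨N4.diagonalDerivation a e, N4.charpoly_diagonalDerivation a e⟩

/-- A monic real polynomial `f` of degree 4 is the characteristic polynomial of some
derivation of the filiform Lie algebra `n₄` if and only if
`f = (X - a) * (X - e) * (X - (a + e)) * (X - (2a + e))` for some real numbers `a` and `e`. -/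
theorem charpoly_derivation_n4_iff (f : Polynomial ℝ) (hf : f.Monic)
    (hdeg : f.natDegree = 4) :
    (∃ D : LieDerivation ℝ N4 N4, LinearMap.charpoly D.toLinearMap = f) ↔
      ∃ a e : ℝ,
        f = (X - C a) * (X - C e) * (X - C (a + e)) * (X - C (2 * a + e)) :=
  charpoly_derivation_n4_iff_general f
end
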